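/- Let n ≥ 2, let e₁ = (1,0,…,0) ∈ ℝ^n, and let Γ₊ = {ξ ∈ ℝ^n \ {0} : ξ·e₁ > −|ξ|/√2}. There exists a map R : Γ₊ → SO(n) (real special orthogonal n×n matrices) such that: (i) each matrix entry r_{jk} : Γ₊ → ℝ is smooth; (ii) R is homogeneous of degree zero, i.e., R(cξ) = R(ξ) for all c > 0 and ξ ∈ Γ₊; (iii) R(ξ)ᵗ ξ = |ξ| e₁ for all ξ ∈ Γ₊; and (iv) for every multi-index α ∈ ℕ₀^n there is a constant C_α with |∂^α_ξ r_{jk}(ξ)| ≤ C_α |ξ|^{−|α|} for all ξ ∈ Γ₊ and all 1 ≤ j, k ≤ n. The analogous statement holds on Γ₋ = {ξ ≠ 0 : ξ·e₁ < |ξ|/√2} with (iii) replaced by R(ξ)ᵗ ξ = −|ξ| e₁. -/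

import Mathlib

noncomputable section
open MeasureTheory Matrix
open scoped ENNReal NNReal

namespace Elastic

/-- Euclidean space `ℝⁿ`. -/
abbrev Rn (n : ℕ) := EuclideanSpace ℝ (Fin n)

/-- Complex vector fields take values in `ℂⁿ`. -/
abbrev Cvec (n : ℕ) := Fin n → ℂ

variable {n : ℕ}

/-- The dot product `x · ξ` on `ℝⁿ`. -/
def dotR (x ξ : Rn n) : ℝ := ∑ j, x j * ξ j

/-- Componentwise Fourier transform `f̂(ξ) = ∫ e^{-i x·ξ} f(x) dx`. -/
def ftrans (f : Rn n → Cvec n) (ξ : Rn n) : Cvec n :=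
  ∫ x : Rn n, Complex.exp (-(Complex.I * (dotR x ξ : ℝ))) • f x

/-- The symbol `L(ξ) = μ|ξ|² Iₙ + (λ+μ) ξξᵗ` of the Lamé operator `-Δ*`. -/
def lameSymbol (lam mu : ℝ) (ξ : Rn n) : Matrix (Fin n) (Fin n) ℝ :=
  (mu * ‖ξ‖ ^ 2) • (1 : Matrix (Fin n) (Fin n) ℝ) +
    (lam + mu) • Matrix.of fun i j => ξ i * ξ j

open Classical in
/-- The positive semidefinite square root `√L(ξ)` of the symbol `L(ξ)`
(defined to be `0` in the degenerate case where `L(ξ)` fails to be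
positive semidefinite; under the standing assumptions `μ > 0`, `λ + 2μ > 0`
the symbol is always positive semidefinite, and positive definite for `ξ ≠ 0`). -/
def lameSqrt (lam mu : ℝ) (ξ : Rn n) : Matrix (Fin n) (Fin n) ℝ :=
  if h : (lameSymbol lam mu ξ).PosSemidef then
    (h.1.eigenvectorUnitary : Matrix (Fin n) (Fin n) ℝ) *
      Matrix.diagonal (Real.sqrt ∘ h.1.eigenvalues) *
      star (h.1.eigenvectorUnitary : Matrix (Fin n) (Fin n) ℝ) else 0

/-- The complexified square-root symbol. -/
def cS (lam mu : ℝ) (ξ : Rn n) : Matrix (Fin n) (Fin n) ℂ :=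
  (lameSqrt lam mu ξ).map (fun a => (a : ℂ))

/-- The matrix symbol `exp(it √L(ξ))` (matrix exponential). -/
def expSym (lam mu t : ℝ) (ξ : Rn n) : Matrix (Fin n) (Fin n) ℂ :=
  NormedSpace.exp ((Complex.I * (t : ℂ)) • cS lam mu ξ)

/-- The matrix symbol `cos(t √L(ξ))`. -/
def cosSym (lam mu t : ℝ) (ξ : Rn n) : Matrix (Fin n) (Fin n) ℂ :=
  (2 : ℂ)⁻¹ • (expSym lam mu t ξ + expSym lam mu (-t) ξ)

/-- The matrix symbol `sin(t √L(ξ)) (√L(ξ))⁻¹`. -/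
def sincSym (lam mu t : ℝ) (ξ : Rn n) : Matrix (Fin n) (Fin n) ℂ :=
  ((2 * Complex.I)⁻¹ • (expSym lam mu t ξ - expSym lam mu (-t) ξ)) * (cS lam mu ξ)⁻¹

/-- Fourier multiplier operator with matrix-valued symbol `m`:
`(m(D)f)(x) = (2π)^{-n} ∫ e^{i x·ξ} m(ξ) f̂(ξ) dξ`. -/
def mulOp (m : Rn n → Matrix (Fin n) (Fin n) ℂ) (f : Rn n → Cvec n) (x : Rn n) : Cvec n :=
  (((2 * Real.pi) ^ n : ℝ)⁻¹) •
    ∫ ξ : Rn n, Complex.exp (Complex.I * (dotR x ξ : ℝ)) • (m ξ).mulVec (ftrans f ξ)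

/-- The scalar symbol `|ξ|^σ` of `|∇|^σ`, as a (diagonal) matrix symbol. -/
def absGradSym (σ : ℝ) (ξ : Rn n) : Matrix (Fin n) (Fin n) ℂ :=
  ((‖ξ‖ ^ σ : ℝ) : ℂ) • (1 : Matrix (Fin n) (Fin n) ℂ)

/-- Componentwise `Lᵖ` norm of a vector field:
`‖h‖_{L^r} = (∑ⱼ ‖hⱼ‖_{L^r}^r)^{1/r}` for `r < ∞`, and `maxⱼ ‖hⱼ‖_{L^∞}` for `r = ∞`. -/
def vecLp {α : Type*} [MeasurableSpace α] (μ : Measure α) (r : ℝ≥0∞)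
    (h : α → Cvec n) : ℝ≥0∞ :=
  if r = ∞ then ⨆ j, eLpNorm (fun x => h x j) ∞ μ
  else (∑ j, eLpNorm (fun x => h x j) r μ ^ r.toReal) ^ r.toReal⁻¹

/-- `L^q` norm in the time variable of an `ℝ≥0∞`-valued quantity. -/
def timeLp (q : ℝ≥0∞) (g : ℝ → ℝ≥0∞) : ℝ≥0∞ :=
  if q = ∞ then essSup g volume
  else (∫⁻ t : ℝ, g t ^ q.toReal) ^ q.toReal⁻¹

/-- The mixed norm `‖u‖_{L^q_t L^r_x}`. -/
def mixed (q r : ℝ≥0∞) (u : ℝ → Rn n → Cvec n) : ℝ≥0∞ :=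
  timeLp q fun t => vecLp volume r (u t)

/-- The mixed norm `‖u‖_{L^q_t Ḣ^σ_r} = ‖ ‖|∇|^σ u(t,·)‖_{L^r} ‖_{L^q_t}`. -/
def mixedSob (q : ℝ≥0∞) (σ : ℝ) (r : ℝ≥0∞) (u : ℝ → Rn n → Cvec n) : ℝ≥0∞ :=
  timeLp q fun t => vecLp volume r (mulOp (absGradSym σ) (u t))

/-- The homogeneous Sobolev norm `‖f‖_{Ḣ^s} = ‖ |ξ|^s f̂(ξ) ‖_{L²_ξ}`. -/
def sobNorm (s : ℝ) (f : Rn n → Cvec n) : ℝ≥0∞ :=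
  (∫⁻ ξ : Rn n, (ENNReal.ofReal (‖ξ‖ ^ s)) ^ 2 *
      ∑ j, ((‖ftrans f ξ j‖₊ : ℝ≥0∞)) ^ 2) ^ (2⁻¹ : ℝ)

/-- The reciprocal `1/q` of an exponent `q ∈ [1,∞]`, as a real number. -/
def rcp (q : ℝ≥0∞) : ℝ := q.toReal⁻¹

/-- The conjugate exponent `q'`, `1/q + 1/q' = 1`. -/
def dualExp (q : ℝ≥0∞) : ℝ≥0∞ := ENNReal.ofReal (1 - rcp q)⁻¹

/-- `(q,r)` is wave-admissible: `q, r ≥ 2`, `r ≠ ∞`, `(q,r,n) ≠ (2,∞,3)` and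
`1/q ≤ ((n-1)/2)(1/2 - 1/r)`. -/
def WaveAdmissible (n : ℕ) (q r : ℝ≥0∞) : Prop :=
  2 ≤ q ∧ 2 ≤ r ∧ r ≠ ∞ ∧ ¬(q = 2 ∧ r = ∞ ∧ n = 3) ∧
    rcp q ≤ ((n : ℝ) - 1) / 2 * (1 / 2 - rcp r)

/-- `(q,r)` is wave-acceptable. -/
def WaveAcceptable (n : ℕ) (q r : ℝ≥0∞) : Prop :=
  (1 ≤ q ∧ q ≠ ∞ ∧ 2 ≤ r ∧ rcp q < ((n : ℝ) - 1) * (1 / 2 - rcp r)) ∨ (q = ∞ ∧ r = 2)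

/-- The Duhamel term `∫₀ᵗ sin((t-s)√(-Δ*)) (√(-Δ*))⁻¹ F(s,·) ds`. -/
def duhamel (lam mu : ℝ) (F : ℝ → Rn n → Cvec n) (t : ℝ) (x : Rn n) : Cvec n :=
  ∫ s in (0 : ℝ)..t, mulOp (sincSym lam mu (t - s)) (F s) x

/-- The solution of the inhomogeneous elastic wave equation with data `(f,g)`
and forcing term `F`, given by Duhamel's formula. -/
def waveSol (lam mu : ℝ) (f g : Rn n → Cvec n) (F : ℝ → Rn n → Cvec n)
    (t : ℝ) (x : Rn n) : Cvec n :=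
  mulOp (cosSym lam mu t) f x + mulOp (sincSym lam mu t) g x + duhamel lam mu F t x

/-- Frobenius norm `|A| = (∑_{i,j} |A_{ij}|²)^{1/2}` of a complex matrix. -/
def frob (A : Matrix (Fin n) (Fin n) ℂ) : ℝ := Real.sqrt (∑ i, ∑ j, ‖A i j‖ ^ 2)

/-- The Fefferman–Phong norm
`‖V‖_{F^p} = sup_{x, ρ>0} ρ^{2-n/p} (∫_{B(x,ρ)} |V(y)|^p dy)^{1/p}`. -/
def fpNorm (p : ℝ) (V : Rn n → Matrix (Fin n) (Fin n) ℂ) : ℝ≥0∞ :=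
  ⨆ (x : Rn n) (ρ : ℝ) (_ : 0 < ρ),
    ENNReal.ofReal (ρ ^ (2 - (n : ℝ) / p)) *
      (∫⁻ y in Metric.ball x ρ, ENNReal.ofReal (frob (V y) ^ p)) ^ p⁻¹

/-- Weighted space-time `L²` norm `( ∫∫ |u(t,x)|² w(x) dx dt )^{1/2}`, where
`|u(t,x)|` is the euclidean norm on `ℂⁿ`. -/
def wtL2 (w : Rn n → ℝ≥0∞) (u : ℝ → Rn n → Cvec n) : ℝ≥0∞ :=
  (∫⁻ t : ℝ, ∫⁻ x : Rn n, (∑ j, ((‖u t x j‖₊ : ℝ≥0∞)) ^ 2) * w x) ^ (2⁻¹ : ℝ)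

/-- The weight `x ↦ |V(x)|` associated to a matrix potential. -/
def vWeight (V : Rn n → Matrix (Fin n) (Fin n) ℂ) (x : Rn n) : ℝ≥0∞ :=
  ENNReal.ofReal (frob (V x))

/-! ### The elastic wave operator as a differential operator -/

/-- Spatial partial derivative `∂/∂x_i`. -/
def pdSpace (i : Fin n) (g : Rn n → ℂ) (x : Rn n) : ℂ :=
  fderiv ℝ g x (EuclideanSpace.single i (1 : ℝ))

/-- The Lamé operator `Δ* v = μ Δ v + (λ+μ) ∇ div v`. -/
def lameOp (lam mu : ℝ) (v : Rn n → Cvec n) (x : Rn n) : Cvec n := fun j =>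
  (mu : ℂ) * ∑ i, pdSpace i (fun y => pdSpace i (fun z => v z j) y) x +
    ((lam + mu : ℝ) : ℂ) * pdSpace j (fun y => ∑ i, pdSpace i (fun z => v z i) y) x

/-- The operator `(∂ₜ² - Δ* + a ∂ₜ - z) u` on space-time `ℝ × ℝⁿ`. -/
def elasticOp (lam mu : ℝ) (a z : ℂ) (u : ℝ × Rn n → Cvec n) (p : ℝ × Rn n) : Cvec n :=
  fun j =>
    deriv (fun t => deriv (fun s => u (s, p.2) j) t) p.1 -
      lameOp lam mu (fun x => u (p.1, x)) p.2 j +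
      a * deriv (fun t => u (t, p.2) j) p.1 - z * u p j

/-! ### Rotations in the frequency space -/

/-- The first standard basis vector `e₁` of `ℝⁿ`. -/
def e1 (n : ℕ) : Fin n → ℝ := fun i => if (i : ℕ) = 0 then 1 else 0

/-- The cone `Γ₊ = {ξ ≠ 0 : ξ·e₁ > -|ξ|/√2}`. -/
def coneP (n : ℕ) : Set (Rn n) :=
  {ξ | ξ ≠ 0 ∧ -(‖ξ‖ / Real.sqrt 2) < ∑ i, ξ i * e1 n i}

/-- The cone `Γ₋ = {ξ ≠ 0 : ξ·e₁ < |ξ|/√2}`. -/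
def coneM (n : ℕ) : Set (Rn n) :=
  {ξ | ξ ≠ 0 ∧ ∑ i, ξ i * e1 n i < ‖ξ‖ / Real.sqrt 2}

/-- `R : Γ → SO(n)` is a smooth degree-zero homogeneous family of rotations with
`R(ξ)ᵗ ξ = ε|ξ| e₁` and Mikhlin-type bounds `|∂^α r_{jk}(ξ)| ≤ C_α |ξ|^{-|α|}`
(the latter encoded via iterated derivatives within `Γ`). -/
def IsNiceRotation (Γ : Set (Rn n)) (ε : ℝ) (R : Rn n → Matrix (Fin n) (Fin n) ℝ) : Prop :=
  (∀ j k : Fin n, ContDiffOn ℝ ((⊤ : ℕ∞) : WithTop ℕ∞) (fun ξ => R ξ j k) Γ) ∧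
  (∀ c : ℝ, 0 < c → ∀ ξ ∈ Γ, R (c • ξ) = R ξ) ∧
  (∀ ξ ∈ Γ, (R ξ)ᵀ * R ξ = 1 ∧ (R ξ).det = 1) ∧
  (∀ ξ ∈ Γ, (R ξ)ᵀ.mulVec (fun i => ξ i) = (ε * ‖ξ‖) • e1 n) ∧
  (∀ k : ℕ, ∃ C : ℝ, ∀ ξ ∈ Γ, ∀ j l : Fin n,
    ‖iteratedFDerivWithin ℝ k (fun ζ => R ζ j l) Γ ξ‖ ≤ C * ‖ξ‖ ^ (-(k : ℝ)))

/-- The projection `𝒫 f = ℱ⁻¹[φ(ξ/|ξ|) f̂]`. -/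
def projOp (φ : Rn n → ℝ) (f : Rn n → Cvec n) : Rn n → Cvec n :=
  mulOp (fun ξ => ((φ (‖ξ‖⁻¹ • ξ) : ℝ) : ℂ) • (1 : Matrix (Fin n) (Fin n) ℂ)) f

/-- The operator `R(D) 𝒫 f = ℱ⁻¹[R(ξ) φ(ξ/|ξ|) f̂]`. -/
def rotProjOp (R : Rn n → Matrix (Fin n) (Fin n) ℝ) (φ : Rn n → ℝ)
    (f : Rn n → Cvec n) : Rn n → Cvec n :=
  mulOp (fun ξ => ((φ (‖ξ‖⁻¹ • ξ) : ℝ) : ℂ) • (R ξ).map (fun a => (a : ℂ))) f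


/-!
For a unit vector `t` put `w = ξ + |ξ| t`. Since `ξ` and `-|ξ| t` have the same length, the
Householder reflection `H_w` swaps them, and `H_t` maps `-|ξ| t` to `|ξ| t`; hence
`R(ξ) = H_w H_t` is a rotation with `R(ξ)ᵗ ξ = |ξ| t`. Its entries are smooth wherever `w ≠ 0`,
i.e. off the ray `ℝ₋ t`, and homogeneous of degree zero. On the cone `ξ · t > -a |ξ|` with
`a < 1` the normalized vectors lie in a compact subset of the sphere avoiding `-t`, where all
derivatives are bounded; rescaling by `|ξ|` turns these bounds into `C_α |ξ|^{-|α|}`.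
(`Γ₊` and `Γ₋` are the cases `t = ±e₁`, `a = 1/√2`.)
-/


section Householder

variable {ι K : Type*} [Fintype ι] [DecidableEq ι] [Field K]

def householder (v : ι → K) : Matrix ι ι K :=
  1 - (2 / (v ⬝ᵥ v)) • vecMulVec v v

lemma householder_transpose (v : ι → K) : (householder v)ᵀ = householder v := by
  simp [householder, transpose_vecMulVec]

lemma householder_mulVec (v x : ι → K) :
    householder v *ᵥ x = x - (2 * (v ⬝ᵥ x) / (v ⬝ᵥ v)) • v := by
  simp only [householder, sub_mulVec, one_mulVec, smul_mulVec, vecMulVec_mulVec, op_smul_eq_smul,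
    smul_smul]
  ring_nf

lemma householder_mulVec_self {v : ι → K} (hv : v ⬝ᵥ v ≠ 0) : householder v *ᵥ v = -v := by
  rw [householder_mulVec, mul_div_assoc, div_self hv]
  module

lemma householder_sub_mulVec {x y : ι → K} (hxy : x ⬝ᵥ x = y ⬝ᵥ y)
    (h : (x - y) ⬝ᵥ (x - y) ≠ 0) : householder (x - y) *ᵥ x = y := by
  have hsym : (x - y) ⬝ᵥ (x - y) = 2 * ((x - y) ⬝ᵥ x) := by
    simp only [sub_dotProduct, dotProduct_sub, dotProduct_comm y x, hxy]
    ring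
  rw [householder_mulVec, ← hsym, div_self h, one_smul, sub_sub_cancel]

lemma householder_mul_self {v : ι → K} (hv : v ⬝ᵥ v ≠ 0) : householder v * householder v = 1 := by
  refine ext_iff_mulVec.2 fun x => ?_
  rw [← mulVec_mulVec, one_mulVec, householder_mulVec v x, mulVec_sub, mulVec_smul,
    householder_mulVec_self hv, householder_mulVec]
  module

lemma det_householder {v : ι → K} (hv : v ⬝ᵥ v ≠ 0) : (householder v).det = -1 := by
  have h : householder v = 1 + vecMulVec (-(2 / (v ⬝ᵥ v)) • v) v := by
    rw [householder, smul_vecMulVec, neg_smul, sub_eq_add_neg]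
  rw [h, vecMulVec_eq Unit, det_one_add_replicateCol_mul_replicateRow, dotProduct_smul,
    smul_eq_mul, neg_mul, div_mul_cancel₀ _ hv]
  norm_num

lemma householder_smul {c : K} (hc : c ≠ 0) (v : ι → K) : householder (c • v) = householder v := by
  simp only [householder, smul_dotProduct, dotProduct_smul, smul_vecMulVec, vecMulVec_smul,
    smul_smul, smul_eq_mul]
  congr 2
  field_simp

theorem contDiffOn_householder_apply {E : Type*} [NormedAddCommGroup E] [NormedSpace ℝ E]
    {m : WithTop ℕ∞} {v : E → ι → ℝ} {s : Set E} (hv : ∀ i, ContDiffOn ℝ m (fun x => v x i) s)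
    (hv0 : ∀ x ∈ s, v x ⬝ᵥ v x ≠ 0) (j l : ι) :
    ContDiffOn ℝ m (fun x => householder (v x) j l) s := by
  simp only [householder, Matrix.sub_apply, Matrix.smul_apply, vecMulVec_apply, smul_eq_mul]
  exact contDiffOn_const.sub <|
    (contDiffOn_const.div (ContDiffOn.sum fun i _ => (hv i).mul (hv i)) hv0).mul
      ((hv j).mul (hv l))

end Householder

section Homogeneous

variable {E F : Type*} [NormedAddCommGroup E] [NormedSpace ℝ E] [NormedAddCommGroup F]
  [NormedSpace ℝ F] {f : E → F}

theorem norm_iteratedFDeriv_le_of_smul_invariant (hf : ∀ c : ℝ, 0 < c → ∀ x, f (c • x) = f x)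
    (k : ℕ) {c : ℝ} (hc : 0 < c) (x : E) :
    ‖iteratedFDeriv ℝ k f x‖ ≤ ‖iteratedFDeriv ℝ k f (c • x)‖ * c ^ k := by
  let g : E ≃L[ℝ] E := ContinuousLinearEquiv.smulLeft (Units.mk0 c hc.ne')
  have hfg : f ∘ g = f := funext fun y => hf c hc y
  have hg : ‖(g : E →L[ℝ] E)‖ ≤ c := ContinuousLinearMap.opNorm_le_bound _ hc.le fun y => by
    simp [g, norm_smul, abs_of_pos hc]
  have hcomp := g.iteratedFDerivWithin_comp_right f uniqueDiffOn_univ (Set.mem_univ (g x)) k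
  rw [hfg, Set.preimage_univ, iteratedFDerivWithin_univ] at hcomp
  calc ‖iteratedFDeriv ℝ k f x‖
      = ‖(iteratedFDeriv ℝ k f (c • x)).compContinuousLinearMap fun _ => (g : E →L[ℝ] E)‖ := by
        rw [hcomp]; rfl
    _ ≤ ‖iteratedFDeriv ℝ k f (c • x)‖ * ∏ _ : Fin k, ‖(g : E →L[ℝ] E)‖ :=
        ContinuousMultilinearMap.norm_compContinuousLinearMap_le _ _
    _ ≤ ‖iteratedFDeriv ℝ k f (c • x)‖ * c ^ k := by
        rw [Fin.prod_const]
        gcongr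

theorem exists_bound_iteratedFDeriv_of_smul_invariant
    (hf : ∀ c : ℝ, 0 < c → ∀ x, f (c • x) = f x) {k : ℕ} {U K : Set E} (hU : IsOpen U)
    (hfU : ContDiffOn ℝ k f U) (hK : IsCompact K) (hKU : K ⊆ U) :
    ∃ C, ∀ x ≠ 0, ‖x‖⁻¹ • x ∈ K → ‖iteratedFDeriv ℝ k f x‖ ≤ C * ‖x‖ ^ (-(k : ℝ)) := by
  have hcont : ContinuousOn (iteratedFDeriv ℝ k f) U :=
    (hfU.continuousOn_iteratedFDerivWithin le_rfl hU.uniqueDiffOn).congr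
      (iteratedFDerivWithin_of_isOpen k hU).symm
  obtain ⟨C, hC⟩ := hK.exists_bound_of_continuousOn (hcont.mono hKU)
  refine ⟨C, fun x hx hxK => ?_⟩
  have hx' : 0 < ‖x‖ := norm_pos_iff.2 hx
  calc ‖iteratedFDeriv ℝ k f x‖ ≤ ‖iteratedFDeriv ℝ k f (‖x‖⁻¹ • x)‖ * ‖x‖⁻¹ ^ k :=
        norm_iteratedFDeriv_le_of_smul_invariant hf k (inv_pos.2 hx') x
    _ ≤ C * ‖x‖⁻¹ ^ k := by gcongr; exact hC _ hxK
    _ = C * ‖x‖ ^ (-(k : ℝ)) := by rw [Real.rpow_neg hx'.le, Real.rpow_natCast, inv_pow]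

end Homogeneous

section Rotation

variable {ι : Type*} [Fintype ι]

open scoped ContDiff

lemma ofLp_dotProduct_self (ξ : EuclideanSpace ℝ ι) : ξ.ofLp ⬝ᵥ ξ.ofLp = ‖ξ‖ ^ 2 := by
  rw [← real_inner_self_eq_norm_sq, EuclideanSpace.inner_eq_star_dotProduct, star_trivial]

def bisector (t : ι → ℝ) (ξ : EuclideanSpace ℝ ι) : ι → ℝ := ξ.ofLp + ‖ξ‖ • t

lemma bisector_smul (t : ι → ℝ) {c : ℝ} (hc : 0 < c) (ξ : EuclideanSpace ℝ ι) :
    bisector t (c • ξ) = c • bisector t ξ := by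
  simp [bisector, norm_smul, abs_of_pos hc, smul_add, smul_smul]

variable {t : ι → ℝ} {ξ : EuclideanSpace ℝ ι}

lemma bisector_dotProduct_self (ht : t ⬝ᵥ t = 1) (ξ : EuclideanSpace ℝ ι) :
    bisector t ξ ⬝ᵥ bisector t ξ = 2 * ‖ξ‖ * (‖ξ‖ + ξ.ofLp ⬝ᵥ t) := by
  simp only [bisector, add_dotProduct, dotProduct_add, smul_dotProduct, dotProduct_smul, ht,
    ofLp_dotProduct_self, dotProduct_comm t, smul_eq_mul]
  ring

lemma bisector_dotProduct_self_pos (ht : t ⬝ᵥ t = 1) (hξ : 0 < ‖ξ‖ + ξ.ofLp ⬝ᵥ t) :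
    0 < bisector t ξ ⬝ᵥ bisector t ξ := by
  have hξ0 : ξ ≠ 0 := by rintro rfl; simp at hξ
  rw [bisector_dotProduct_self ht]
  have := norm_pos_iff.2 hξ0
  positivity

lemma isOpen_rotationTo_domain (t : ι → ℝ) :
    IsOpen {ξ : EuclideanSpace ℝ ι | 0 < ‖ξ‖ + ξ.ofLp ⬝ᵥ t} :=
  isOpen_lt continuous_const (by fun_prop)

def cone (t : ι → ℝ) (a : ℝ) : Set (EuclideanSpace ℝ ι) :=
  {ξ | ξ ≠ 0 ∧ -(a * ‖ξ‖) < ξ.ofLp ⬝ᵥ t}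

lemma isOpen_cone (t : ι → ℝ) (a : ℝ) : IsOpen (cone t a) :=
  isOpen_ne.inter <| isOpen_lt (by fun_prop : Continuous fun ξ : EuclideanSpace ℝ ι => -(a * ‖ξ‖))
    (by fun_prop)

lemma cone_subset_rotationTo_domain {a : ℝ} (ha : a ≤ 1) :
    cone t a ⊆ {ξ | 0 < ‖ξ‖ + ξ.ofLp ⬝ᵥ t} := fun ξ hξ => by
  have := mul_le_mul_of_nonneg_right ha (norm_nonneg ξ)
  change 0 < ‖ξ‖ + ξ.ofLp ⬝ᵥ t
  linarith [hξ.2]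

variable [DecidableEq ι]

def rotationTo (t : ι → ℝ) (ξ : EuclideanSpace ℝ ι) : Matrix ι ι ℝ :=
  householder (bisector t ξ) * householder t

lemma rotationTo_smul (t : ι → ℝ) {c : ℝ} (hc : 0 < c) (ξ : EuclideanSpace ℝ ι) :
    rotationTo t (c • ξ) = rotationTo t ξ := by
  rw [rotationTo, rotationTo, bisector_smul t hc, householder_smul hc.ne']

lemma transpose_rotationTo_mul_self (ht : t ⬝ᵥ t = 1) (hξ : 0 < ‖ξ‖ + ξ.ofLp ⬝ᵥ t) :
    (rotationTo t ξ)ᵀ * rotationTo t ξ = 1 := by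
  rw [rotationTo, transpose_mul, householder_transpose, householder_transpose, Matrix.mul_assoc,
    ← Matrix.mul_assoc (householder (bisector t ξ)),
    householder_mul_self (bisector_dotProduct_self_pos ht hξ).ne', Matrix.one_mul,
    householder_mul_self (ht ▸ one_ne_zero)]

lemma det_rotationTo (ht : t ⬝ᵥ t = 1) (hξ : 0 < ‖ξ‖ + ξ.ofLp ⬝ᵥ t) :
    (rotationTo t ξ).det = 1 := by
  rw [rotationTo, det_mul, det_householder (bisector_dotProduct_self_pos ht hξ).ne',
    det_householder (ht ▸ one_ne_zero)]
  norm_num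

lemma transpose_rotationTo_mulVec (ht : t ⬝ᵥ t = 1) (hξ : 0 < ‖ξ‖ + ξ.ofLp ⬝ᵥ t) :
    (rotationTo t ξ)ᵀ *ᵥ ξ.ofLp = ‖ξ‖ • t := by
  have hw : bisector t ξ = ξ.ofLp - (-‖ξ‖) • t := by rw [bisector, neg_smul, sub_neg_eq_add]
  have hreflect : householder (bisector t ξ) *ᵥ ξ.ofLp = (-‖ξ‖) • t := by
    rw [hw]
    refine householder_sub_mulVec ?_ (hw ▸ (bisector_dotProduct_self_pos ht hξ).ne')
    rw [smul_dotProduct, dotProduct_smul, ht, ofLp_dotProduct_self, smul_eq_mul, smul_eq_mul]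
    ring
  rw [rotationTo, transpose_mul, householder_transpose, householder_transpose, ← mulVec_mulVec,
    hreflect, mulVec_smul, householder_mulVec_self (ht ▸ one_ne_zero), smul_neg,
    neg_smul, neg_neg]

lemma contDiffOn_rotationTo_apply (ht : t ⬝ᵥ t = 1) (j k : ι) :
    ContDiffOn ℝ ∞ (fun ξ => rotationTo t ξ j k) {ξ | 0 < ‖ξ‖ + ξ.ofLp ⬝ᵥ t} := by
  have hbisector : ∀ i, ContDiffOn ℝ ∞ (fun ξ => bisector t ξ i) {ξ | 0 < ‖ξ‖ + ξ.ofLp ⬝ᵥ t} := by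
    intro i ξ hξ
    have hξ0 : ξ ≠ 0 := by rintro rfl; simp at hξ
    exact ((EuclideanSpace.proj i).contDiff.contDiffAt.add
      ((contDiffAt_norm ℝ hξ0).mul contDiffAt_const)).contDiffWithinAt
  simp only [rotationTo, mul_apply]
  exact ContDiffOn.sum fun l _ =>
    (contDiffOn_householder_apply hbisector (fun ξ hξ => (bisector_dotProduct_self_pos ht hξ).ne')
      j l).mul contDiffOn_const

lemma exists_bound_iteratedFDeriv_rotationTo_apply (ht : t ⬝ᵥ t = 1) {a : ℝ} (ha : a < 1)
    (k : ℕ) (j l : ι) :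
    ∃ C, ∀ ξ : EuclideanSpace ℝ ι, ξ ≠ 0 → -(a * ‖ξ‖) ≤ ξ.ofLp ⬝ᵥ t →
      ‖iteratedFDeriv ℝ k (fun ζ => rotationTo t ζ j l) ξ‖ ≤ C * ‖ξ‖ ^ (-(k : ℝ)) := by
  set K := Metric.sphere (0 : EuclideanSpace ℝ ι) 1 ∩ {ξ | -a ≤ ξ.ofLp ⬝ᵥ t}
  have hK : IsCompact K :=
    (isCompact_sphere 0 1).inter_right (isClosed_le continuous_const (by fun_prop))
  have hKU : K ⊆ {ξ | 0 < ‖ξ‖ + ξ.ofLp ⬝ᵥ t} := by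
    rintro ξ ⟨hξ1, hξa⟩
    rw [mem_sphere_zero_iff_norm] at hξ1
    change -a ≤ ξ.ofLp ⬝ᵥ t at hξa
    change 0 < ‖ξ‖ + ξ.ofLp ⬝ᵥ t
    linarith
  obtain ⟨C, hC⟩ := exists_bound_iteratedFDeriv_of_smul_invariant
    (fun c hc ξ => by rw [rotationTo_smul t hc]) (isOpen_rotationTo_domain t)
    ((contDiffOn_rotationTo_apply ht j l).of_le (by exact_mod_cast le_top)) hK hKU
  refine ⟨C, fun ξ hξ hξa => hC ξ hξ ⟨?_, ?_⟩⟩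
  · exact mem_sphere_zero_iff_norm.2 (norm_smul_inv_norm (𝕜 := ℝ) hξ)
  · show -a ≤ (‖ξ‖⁻¹ • ξ).ofLp ⬝ᵥ t
    rw [WithLp.ofLp_smul, smul_dotProduct, smul_eq_mul, le_inv_mul_iff₀ (norm_pos_iff.2 hξ)]
    linarith

lemma exists_bound_iteratedFDeriv_rotationTo (ht : t ⬝ᵥ t = 1) {a : ℝ} (ha : a < 1) (k : ℕ) :
    ∃ C, ∀ ξ : EuclideanSpace ℝ ι, ξ ≠ 0 → -(a * ‖ξ‖) ≤ ξ.ofLp ⬝ᵥ t → ∀ j l,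
      ‖iteratedFDeriv ℝ k (fun ζ => rotationTo t ζ j l) ξ‖ ≤ C * ‖ξ‖ ^ (-(k : ℝ)) := by
  choose C hC using exists_bound_iteratedFDeriv_rotationTo_apply ht ha k
  obtain ⟨M, hM⟩ := Finite.exists_le fun p : ι × ι => C p.1 p.2
  exact ⟨M, fun ξ hξ hξa j l => (hC j l ξ hξ hξa).trans (by gcongr; exact hM (j, l))⟩

end Rotation

lemma e1_dotProduct_self (hn : 0 < n) : e1 n ⬝ᵥ e1 n = 1 := by
  have : e1 n = Pi.single ⟨0, hn⟩ 1 := by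
    funext i
    simp [e1, Pi.single_apply, Fin.ext_iff]
  simp [this]

theorem isNiceRotation_rotationTo (hn : 0 < n) {ε : ℝ} (hε : ε * ε = 1) {t : Fin n → ℝ}
    (hte : t = ε • e1 n) {a : ℝ} (ha : a < 1) :
    IsNiceRotation (cone t a) ε (rotationTo t) := by
  have ht : t ⬝ᵥ t = 1 := by
    rw [hte, smul_dotProduct, dotProduct_smul, e1_dotProduct_self hn, smul_smul, smul_eq_mul,
      mul_one, hε]
  have hdom := cone_subset_rotationTo_domain (t := t) ha.le
  refine ⟨fun j k => (contDiffOn_rotationTo_apply ht j k).mono hdom,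
    fun c hc ξ _ => rotationTo_smul t hc ξ,
    fun ξ hξ => ⟨transpose_rotationTo_mul_self ht (hdom hξ), det_rotationTo ht (hdom hξ)⟩,
    fun ξ hξ => ?_, fun k => ?_⟩
  · rw [transpose_rotationTo_mulVec ht (hdom hξ), hte, smul_smul, mul_comm]
  · obtain ⟨C, hC⟩ := exists_bound_iteratedFDeriv_rotationTo ht ha k
    refine ⟨C, fun ξ hξ j l => ?_⟩
    rw [iteratedFDerivWithin_of_isOpen k (isOpen_cone t a) hξ]
    exact hC ξ hξ.1 hξ.2.le j l

lemma coneP_eq_cone : coneP n = cone (e1 n) (√2)⁻¹ := by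
  ext ξ
  simp only [coneP, cone, div_eq_inv_mul]
  rfl

lemma coneM_eq_cone : coneM n = cone (-e1 n) (√2)⁻¹ := by
  ext ξ
  simp only [coneM, cone, dotProduct_neg, div_eq_inv_mul, neg_lt_neg_iff]
  rfl

/-- Lemma 2.1 / rotations in the frequency space: on each of the
cones `Γ₊ = {ξ ≠ 0 : ξ·e₁ > -|ξ|/√2}` and `Γ₋ = {ξ ≠ 0 : ξ·e₁ < |ξ|/√2}` there is a
smooth, degree-zero homogeneous family of rotations `R : Γ_± → SO(n)` with
`R(ξ)ᵗ ξ = ±|ξ| e₁` whose entries satisfy the Mikhlin-type bounds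
`|∂^α r_{jk}(ξ)| ≤ C_α |ξ|^{-|α|}`. -/
theorem rotations_exist (n : ℕ) (hn : 2 ≤ n) :
    (∃ R : Rn n → Matrix (Fin n) (Fin n) ℝ, IsNiceRotation (coneP n) 1 R) ∧
    (∃ R : Rn n → Matrix (Fin n) (Fin n) ℝ, IsNiceRotation (coneM n) (-1) R) := by
  have hn0 : 0 < n := by omega
  have ha : (√2)⁻¹ < 1 := inv_lt_one_of_one_lt₀ Real.one_lt_sqrt_two
  rw [coneP_eq_cone, coneM_eq_cone]
  exact ⟨⟨_, isNiceRotation_rotationTo hn0 (by norm_num) (one_smul ℝ _).symm ha⟩,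
    ⟨_, isNiceRotation_rotationTo hn0 (by norm_num) (neg_one_smul ℝ _).symm ha⟩⟩

end Elastic
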